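/- Let G be a profinite group isomorphic to the profinite completion of the integers (e.g. Gal(Q_ℓ^ur/Q_ℓ)), and M a finite discrete G-module. Then H^2(G, M) = 0. -/

import Mathlib

/-!
By compactness, a continuous 2-cocycle `f` with values in the finite discrete module `M` is
invariant under an open subgroup `e⁻¹(nẐ)` that also acts trivially on `M`. On the powers of the
topological generator `σ = e⁻¹(1)`, `f` is the coboundary of
`h j = f(1,1) - ∑_{k<j} f(σ^k, σ)`, and invariance under `σ^n` gives
`h (j + n) = h j + (h n - h 0)`. So `h` has period `n·|M|` and descends to
`G ⧸ e⁻¹(n|M|Ẑ) ≅ ℤ/n|M|`; the resulting locally constant cochain has coboundary `f`.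
In other words, inflation from `ℤ/n` to `ℤ/n|M|` kills `H²`.
-/

instance (p : Nat.Primes) : Fact (p : ℕ).Prime := ⟨p.2⟩

open Topology Filter Pointwise groupCohomology

namespace PadicInt

variable {p : ℕ} [Fact p.Prime]

theorem pow_dvd_iff_norm_le {k : ℕ} {x : ℤ_[p]} :
    (p : ℤ_[p]) ^ k ∣ x ↔ ‖x‖ ≤ (p : ℝ) ^ (-(k : ℤ)) := by
  rw [norm_le_pow_iff_mem_span_pow, Ideal.mem_span_singleton]

theorem isOpen_setOf_pow_dvd (k : ℕ) : IsOpen {x : ℤ_[p] | (p : ℤ_[p]) ^ k ∣ x} := by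
  have hp : (0 : ℝ) < p := by exact_mod_cast (Fact.out : p.Prime).pos
  convert IsUltrametricDist.isOpen_closedBall (0 : ℤ_[p]) (zpow_pos hp (-(k : ℤ))).ne' using 1
  ext x
  simp [pow_dvd_iff_norm_le]

theorem exists_pow_dvd_subset_of_mem_nhds {t : Set ℤ_[p]} (ht : t ∈ 𝓝 0) :
    ∃ k : ℕ, {x | (p : ℤ_[p]) ^ k ∣ x} ⊆ t := by
  obtain ⟨ε, hε, hball⟩ := Metric.mem_nhds_iff.mp ht
  obtain ⟨k, hk⟩ := exists_pow_neg_lt p hε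
  exact ⟨k, fun x hx => hball <| mem_ball_zero_iff.mpr <| (pow_dvd_iff_norm_le.mp hx).trans_lt hk⟩

theorem natCast_dvd_iff {N : ℕ} (hN : N ≠ 0) {x : ℤ_[p]} :
    (N : ℤ_[p]) ∣ x ↔ (p : ℤ_[p]) ^ N.factorization p ∣ x := by
  have hunit : IsUnit ((ordCompl[p] N : ℕ) : ℤ_[p]) :=
    isUnit_iff.mpr (norm_natCast_eq_one_iff.mpr (Nat.coprime_ordCompl Fact.out hN))
  conv_lhs => rw [← Nat.ordProj_mul_ordCompl_eq_self N p, Nat.cast_mul, Nat.cast_pow]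
  exact hunit.mul_right_dvd

end PadicInt

abbrev Zhat : Type := ∀ p : Nat.Primes, ℤ_[(p : ℕ)]

namespace Zhat

theorem natCast_dvd_iff {N : ℕ} (hN : N ≠ 0) {z : Zhat} :
    (N : Zhat) ∣ z ↔ ∀ p : Nat.Primes, ((p : ℕ) : ℤ_[(p : ℕ)]) ^ N.factorization p ∣ z p := by
  simp only [pi_dvd_iff, Pi.natCast_apply, PadicInt.natCast_dvd_iff hN]

theorem isOpen_setOf_natCast_dvd {N : ℕ} (hN : N ≠ 0) : IsOpen {z : Zhat | (N : Zhat) ∣ z} := by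
  let S : Set Nat.Primes := {p | (p : ℕ) ∈ N.primeFactors}
  have hS : S.Finite := N.primeFactors.finite_toSet.preimage Subtype.val_injective.injOn
  have hset : {z : Zhat | (N : Zhat) ∣ z} =
      ⋂ p ∈ S, (fun z : Zhat => z p) ⁻¹' {x | ((p : ℕ) : ℤ_[(p : ℕ)]) ^ N.factorization p ∣ x} := by
    ext z
    simp only [Set.mem_ofPred_eq, Set.mem_iInter, Set.mem_preimage, natCast_dvd_iff hN]
    refine forall_congr' fun p => ⟨fun h _ => h, fun h => ?_⟩
    by_cases hp : p ∈ S
    · exact h hp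
    · have hp' : N.factorization p = 0 := by
        rwa [Set.mem_ofPred_eq, ← Nat.support_factorization, Finsupp.mem_support_iff, not_not] at hp
      rw [hp', pow_zero]
      exact one_dvd _
  rw [hset]
  exact hS.isOpen_biInter fun p _ =>
    (PadicInt.isOpen_setOf_pow_dvd (N.factorization p)).preimage (continuous_apply p)

theorem exists_natCast_dvd_subset_of_mem_nhds {U : Set Zhat} (hU : U ∈ 𝓝 0) :
    ∃ N : ℕ, N ≠ 0 ∧ {z : Zhat | (N : Zhat) ∣ z} ⊆ U := by
  rw [nhds_pi, Filter.mem_pi'] at hU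
  obtain ⟨I, t, ht, hIt⟩ := hU
  choose k hk using fun p => PadicInt.exists_pow_dvd_subset_of_mem_nhds (ht p)
  refine ⟨∏ p ∈ I, (p : ℕ) ^ k p, Finset.prod_ne_zero_iff.mpr fun p _ => pow_ne_zero _ p.2.ne_zero,
    fun z hz => hIt fun p hp => hk p ?_⟩
  have hdvd : (p : ℕ) ^ k p ∣ ∏ p ∈ I, (p : ℕ) ^ k p := Finset.dvd_prod_of_mem _ hp
  exact_mod_cast (Nat.cast_dvd_cast hdvd).trans (pi_dvd_iff.mp hz p)

theorem natCast_dvd_intCast_iff {N : ℕ} (hN : N ≠ 0) {i : ℤ} :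
    (N : Zhat) ∣ (i : Zhat) ↔ (N : ℤ) ∣ i := by
  refine ⟨fun h => ?_, fun h => by exact_mod_cast map_dvd (Int.castRingHom Zhat) h⟩
  rw [Int.natCast_dvd, Nat.dvd_iff_prime_pow_dvd_dvd]
  intro q k hq hqk
  have hle : k ≤ N.factorization q := (hq.pow_dvd_iff_le_factorization hN).mp hqk
  have : Fact q.Prime := ⟨hq⟩
  have hqi : (q : ℤ_[q]) ^ N.factorization q ∣ (i : ℤ_[q]) := (natCast_dvd_iff hN).mp h ⟨q, hq⟩
  rw [PadicInt.pow_p_dvd_int_iff, ← Int.natCast_pow, Int.natCast_dvd] at hqi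
  exact (pow_dvd_pow q hle).trans hqi

theorem exists_natCast_dvd_sub_natCast {N : ℕ} (hN : N ≠ 0) (z : Zhat) :
    ∃ i : ℕ, (N : Zhat) ∣ z - i := by
  let S : Finset Nat.Primes := N.primeFactors.subtype Nat.Prime
  let a : Nat.Primes → ℕ := fun p => (z p).appr (N.factorization p)
  let m : Nat.Primes → ℕ := fun p => (p : ℕ) ^ N.factorization p
  obtain ⟨i, hi⟩ := Nat.chineseRemainderOfFinset a m S (fun p _ => pow_ne_zero _ p.2.ne_zero)
    fun p _ q _ hpq =>
      Nat.Coprime.pow _ _ ((Nat.coprime_primes p.2 q.2).mpr (Subtype.coe_ne_coe.mpr hpq))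
  refine ⟨i, (natCast_dvd_iff hN).mpr fun p => ?_⟩
  by_cases hp : (p : ℕ) ∈ N.primeFactors
  · have happr := Ideal.mem_span_singleton.mp ((z p).appr_spec (N.factorization p))
    have hcong : ((p : ℕ) ^ N.factorization p : ℤ) ∣ ((z p).appr (N.factorization p) : ℤ) - i :=
      Nat.modEq_iff_dvd.mp (hi p (Finset.mem_subtype.mpr hp))
    have hcong' := Int.cast_dvd_cast (α := ℤ_[(p : ℕ)]) _ _ hcong
    push_cast at hcong'
    simpa using dvd_add happr hcong'
  · rw [← Nat.support_factorization, Finsupp.notMem_support_iff] at hp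
    simp [hp]

end Zhat

section UniformlyLocallyConstant

variable {G Y : Type*} [Monoid G] [TopologicalSpace G] [ContinuousMul G] [CompactSpace G]
  [TopologicalSpace Y] [DiscreteTopology Y]

theorem Continuous.eventually_forall_mul_eq {φ : G → Y} (hφ : Continuous φ) :
    ∀ᶠ u in 𝓝 (1 : G), ∀ x, φ (x * u) = φ x := by
  have hφ' : IsLocallyConstant φ := (IsLocallyConstant.iff_continuous φ).mpr hφ
  have hφmul : IsLocallyConstant fun z : G × G => φ (z.2 * z.1) :=
    (IsLocallyConstant.iff_continuous _).mpr (hφ.comp (by fun_prop))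
  simpa using isCompact_univ.eventually_forall_of_forall_eventually (x₀ := (1 : G))
    (P := fun u x => φ (x * u) = φ x) fun x _ => by
      filter_upwards [hφmul.eventually_eq (1, x),
        (continuous_snd.tendsto (1, x)).eventually (hφ'.eventually_eq x)] with z h₁ h₂
      simp_all

theorem Continuous.exists_mem_nhds_one_forall_mul_mul_eq {φ : G → G → Y}
    (hφ : Continuous fun q : G × G => φ q.1 q.2) :
    ∃ V ∈ 𝓝 (1 : G), ∀ u ∈ V, ∀ v ∈ V, ∀ x y, φ (x * u) (y * v) = φ x y := by
  have hφ' := hφ.eventually_forall_mul_eq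
  rw [Prod.one_eq_mk, nhds_prod_eq] at hφ'
  obtain ⟨V, hV, hsub⟩ := mem_prod_self_iff.mp hφ'
  exact ⟨V, hV, fun u hu v hv x y => hsub (Set.mk_mem_prod hu hv) (x, y)⟩

end UniformlyLocallyConstant

theorem eventually_forall_smul_eq {G M : Type*} [Group G] [TopologicalSpace G]
    [TopologicalSpace M] [DiscreteTopology M] [Finite M] [MulAction G M] [ContinuousSMul G M] :
    ∀ᶠ u in 𝓝 (1 : G), ∀ m : M, u • m = m :=
  eventually_all.mpr fun m => (stabilizer_isOpen G m).mem_nhds (MulAction.stabilizer G m).one_mem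

theorem periodic_mul_of_periodic_sub {M : Type*} [AddCommGroup M] {h : ℕ → M} {n E : ℕ}
    (hd : Function.Periodic (fun j => h (j + 1) - h j) n) (hE : ∀ m : M, E • m = 0) :
    Function.Periodic h (n * E) := by
  have hshift : ∀ j, h (j + n) = h j + (h n - h 0) := by
    intro j
    induction j with
    | zero => simp
    | succ j ih =>
      have hj : h (j + n + 1) - h (j + n) = h (j + 1) - h j := hd j
      rw [Nat.add_right_comm, ← sub_add_cancel (h (j + n + 1)) (h (j + n)), hj, ih]
      abel
  have hmul : ∀ m j, h (j + n * m) = h j + m • (h n - h 0) := by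
    intro m
    induction m with
    | zero => simp
    | succ m ih => intro j; rw [mul_add_one, ← add_assoc, hshift, ih, succ_nsmul]; abel
  intro j
  rw [hmul, hE, add_zero]

section Cochain

variable {G M : Type*} [Monoid G] [AddCommGroup M]

def powCochain (f : G × G → M) (σ : G) (j : ℕ) : M :=
  f (1, 1) - ∑ k ∈ Finset.range j, f (σ ^ k, σ)

theorem powCochain_succ (f : G × G → M) (σ : G) (j : ℕ) :
    powCochain f σ (j + 1) = powCochain f σ j - f (σ ^ j, σ) := by
  simp only [powCochain, Finset.sum_range_succ]
  abel

theorem powCochain_periodic {f : G × G → M} {σ : G} {n E : ℕ}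
    (hn : ∀ k, f (σ ^ (k + n), σ) = f (σ ^ k, σ)) (hE : ∀ m : M, E • m = 0) :
    Function.Periodic (powCochain f σ) (n * E) :=
  periodic_mul_of_periodic_sub (fun j => by simp only [powCochain_succ, sub_sub_cancel_left, hn]) hE

variable [DistribMulAction G M]

theorem powCochain_coboundary {f : G × G → M} (hf : IsCocycle₂ f) (σ : G) (i j : ℕ) :
    σ ^ i • powCochain f σ j - powCochain f σ (i + j) + powCochain f σ i = f (σ ^ i, σ ^ j) := by
  induction j with
  | zero =>
    rw [pow_zero, map_one_snd_of_isCocycle₂ hf, add_zero]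
    simp only [powCochain, Finset.range_zero, Finset.sum_empty, sub_zero]
    abel
  | succ j ih =>
    have hcoc := hf (σ ^ i) (σ ^ j) σ
    rw [← pow_add, ← pow_succ] at hcoc
    have hnext : f (σ ^ i, σ ^ (j + 1)) =
        f (σ ^ (i + j), σ) + f (σ ^ i, σ ^ j) - σ ^ i • f (σ ^ j, σ) := by
      rw [hcoc]; abel
    rw [← add_assoc, powCochain_succ, powCochain_succ, smul_sub, hnext, ← ih]
    abel

end Cochain

section Residue

variable {G : Type*} [Group G] {K : Subgroup G} {σ : G} {N : ℕ}

theorem modEq_of_inv_pow_mul_mem (hK : ∀ i : ℤ, σ ^ i ∈ K → (N : ℤ) ∣ i) {a b : ℕ} {x : G}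
    (ha : (σ ^ a)⁻¹ * x ∈ K) (hb : (σ ^ b)⁻¹ * x ∈ K) : a ≡ b [MOD N] := by
  have hab : (σ ^ a)⁻¹ * x * ((σ ^ b)⁻¹ * x)⁻¹ = σ ^ ((b : ℤ) - a) := by group
  exact Nat.modEq_iff_dvd.mpr (hK _ (hab ▸ K.mul_mem ha (K.inv_mem hb)))

theorem inv_pow_mul_mul_mem [K.Normal] {a b : ℕ} {x y : G} (hx : (σ ^ a)⁻¹ * x ∈ K)
    (hy : (σ ^ b)⁻¹ * y ∈ K) : (σ ^ (a + b))⁻¹ * (x * y) ∈ K := by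
  have hxy : (σ ^ b)⁻¹ * ((σ ^ a)⁻¹ * x) * (σ ^ b)⁻¹⁻¹ * ((σ ^ b)⁻¹ * y) =
      (σ ^ (a + b))⁻¹ * (x * y) := by group
  exact hxy ▸ K.mul_mem (‹K.Normal›.conj_mem _ hx _) hy

end Residue

-- `hgen` and `hdvd` say that `G ⧸ K` is cyclic of order `N`, generated by the image of `σ`.
theorem exists_continuous_coboundary_of_periodic {G M : Type*} [Group G] [TopologicalSpace G]
    [ContinuousMul G] [AddCommGroup M] [TopologicalSpace M] [DistribMulAction G M] {f : G × G → M}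
    (hf : IsCocycle₂ f) (K : Subgroup G) [K.Normal] (hKopen : IsOpen (K : Set G))
    (hKf : ∀ x y, ∀ u ∈ K, ∀ v ∈ K, f (x * u, y * v) = f (x, y))
    (hKact : ∀ u ∈ K, ∀ m : M, u • m = m) (σ : G) (N : ℕ)
    (hgen : ∀ x, ∃ i : ℕ, (σ ^ i)⁻¹ * x ∈ K) (hdvd : ∀ i : ℤ, σ ^ i ∈ K → (N : ℤ) ∣ i)
    (hper : Function.Periodic (powCochain f σ) N) :
    ∃ g : G → M, Continuous g ∧ ∀ x y, x • g y - g (x * y) + g x = f (x, y) := by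
  choose r hr using hgen
  have hcongr {a b : ℕ} (hab : a ≡ b [MOD N]) : powCochain f σ a = powCochain f σ b := by
    rw [← hper.map_mod_nat, hab, hper.map_mod_nat]
  have hfac (x : G) : σ ^ r x * ((σ ^ r x)⁻¹ * x) = x := mul_inv_cancel_left _ _
  have hsmul (x : G) (m : M) : x • m = σ ^ r x • m := by
    conv_lhs => rw [← hfac x]
    rw [mul_smul, hKact _ (hr x)]
  refine ⟨fun x => powCochain f σ (r x), ?_, fun x y => ?_⟩
  · refine IsLocallyConstant.continuous <| (IsLocallyConstant.iff_exists_open _).mpr fun x =>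
      ⟨x • (K : Set G), hKopen.smul x, ⟨1, K.one_mem, mul_one x⟩, ?_⟩
    rintro _ ⟨u, hu, rfl⟩
    refine hcongr (modEq_of_inv_pow_mul_mem hdvd (hr _) ?_)
    simpa only [smul_eq_mul, ← mul_assoc] using K.mul_mem (hr x) hu
  · calc x • powCochain f σ (r y) - powCochain f σ (r (x * y)) + powCochain f σ (r x)
        = σ ^ r x • powCochain f σ (r y) - powCochain f σ (r x + r y) + powCochain f σ (r x) := by
          rw [hcongr (modEq_of_inv_pow_mul_mem hdvd (hr _) (inv_pow_mul_mul_mem (hr x) (hr y))),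
            hsmul]
      _ = f (σ ^ r x, σ ^ r y) := powCochain_coboundary hf σ _ _
      _ = f (x, y) := by
          conv_rhs => rw [← hfac x, ← hfac y]
          exact (hKf _ _ _ (hr x) _ (hr y)).symm

section DvdSubgroup

variable {G : Type*} [Group G] (e : G ≃* Multiplicative Zhat)

def dvdSubgroup (N : ℕ) : Subgroup G where
  carrier := {x | (N : Zhat) ∣ (e x).toAdd}
  mul_mem' hx hy := by simpa only [Set.mem_ofPred_eq, map_mul, toAdd_mul] using dvd_add hx hy
  one_mem' := by simp only [Set.mem_ofPred_eq, map_one, toAdd_one, dvd_zero]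
  inv_mem' hx := by simpa only [Set.mem_ofPred_eq, map_inv, toAdd_inv, dvd_neg] using hx

variable {e}

theorem mem_dvdSubgroup {N : ℕ} {x : G} : x ∈ dvdSubgroup e N ↔ (N : Zhat) ∣ (e x).toAdd :=
  Iff.rfl

instance (N : ℕ) : (dvdSubgroup e N).Normal where
  conj_mem x hx g := by
    have hconj : e (g * x * g⁻¹) = e x := by
      rw [map_mul, map_mul, map_inv, mul_comm (e g), mul_inv_cancel_right]
    rwa [mem_dvdSubgroup, hconj]

theorem dvdSubgroup_mono {d N : ℕ} (h : d ∣ N) : dvdSubgroup e N ≤ dvdSubgroup e d :=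
  fun _ hx => (Nat.cast_dvd_cast h).trans hx

theorem isOpen_dvdSubgroup [TopologicalSpace G] (he : Continuous e) {N : ℕ} (hN : N ≠ 0) :
    IsOpen (dvdSubgroup e N : Set G) :=
  (Zhat.isOpen_setOf_natCast_dvd hN).preimage (continuous_toAdd.comp he)

theorem zpow_mem_dvdSubgroup_iff {N : ℕ} (hN : N ≠ 0) (i : ℤ) :
    e.symm (.ofAdd 1) ^ i ∈ dvdSubgroup e N ↔ (N : ℤ) ∣ i := by
  rw [mem_dvdSubgroup, map_zpow, MulEquiv.apply_symm_apply, toAdd_zpow, toAdd_ofAdd, zsmul_one,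
    Zhat.natCast_dvd_intCast_iff hN]

theorem exists_inv_pow_mul_mem_dvdSubgroup {N : ℕ} (hN : N ≠ 0) (x : G) :
    ∃ i : ℕ, (e.symm (.ofAdd 1) ^ i)⁻¹ * x ∈ dvdSubgroup e N := by
  obtain ⟨i, hi⟩ := Zhat.exists_natCast_dvd_sub_natCast hN (e x).toAdd
  refine ⟨i, ?_⟩
  rwa [mem_dvdSubgroup, map_mul, map_inv, map_pow, MulEquiv.apply_symm_apply, toAdd_mul, toAdd_inv,
    toAdd_pow, toAdd_ofAdd, nsmul_one, neg_add_eq_sub]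

theorem exists_dvdSubgroup_subset [TopologicalSpace G] (he' : Continuous e.symm) {V : Set G}
    (hV : V ∈ 𝓝 1) : ∃ N : ℕ, N ≠ 0 ∧ (dvdSubgroup e N : Set G) ⊆ V := by
  have hU : {z : Zhat | e.symm (.ofAdd z) ∈ V} ∈ 𝓝 0 :=
    (he'.comp continuous_ofAdd).continuousAt.preimage_mem_nhds (by simpa using hV)
  obtain ⟨N, hN, hNU⟩ := Zhat.exists_natCast_dvd_subset_of_mem_nhds hU
  exact ⟨N, hN, fun x hx => by simpa using hNU hx⟩

end DvdSubgroup

/-- Let `G` be a profinite group isomorphic (as a topological group) to the profinite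
completion `Ẑ ≅ ∏_p ℤ_p` of the integers (e.g. `Gal(Q_ℓ^ur/Q_ℓ)`), and let `M` be a
finite discrete `G`-module.  Then `H²(G, M) = 0` for continuous cohomology: every
continuous 2-cocycle `f : G × G → M` is the coboundary of a continuous 1-cochain. -/
theorem h2_of_Zhat_vanishes
    {G : Type*} [Group G] [TopologicalSpace G] [IsTopologicalGroup G]
    (e : G ≃* Multiplicative (∀ p : Nat.Primes, ℤ_[(p : ℕ)]))
    (he : Continuous e) (he' : Continuous e.symm)
    {M : Type*} [AddCommGroup M] [Finite M] [TopologicalSpace M] [DiscreteTopology M]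
    [DistribMulAction G M] (hact : Continuous fun q : G × M => q.1 • q.2)
    (f : G → G → M) (hf : Continuous fun q : G × G => f q.1 q.2)
    (hcocycle : ∀ σ τ υ : G,
      σ • f τ υ - f (σ * τ) υ + f σ (τ * υ) - f σ τ = 0) :
    ∃ g : G → M, Continuous g ∧ ∀ σ τ : G, f σ τ = σ • g τ - g (σ * τ) + g σ := by
  have : CompactSpace G := (e.symm.surjective.comp Multiplicative.ofAdd.surjective).compactSpace
    (he'.comp continuous_ofAdd)
  have : ContinuousSMul G M := ⟨hact⟩
  have hcoc : IsCocycle₂ fun q : G × G => f q.1 q.2 := fun x y z => by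
    rw [← sub_eq_zero, ← neg_eq_zero, ← hcocycle x y z]; abel
  obtain ⟨V, hV, hVf⟩ := hf.exists_mem_nhds_one_forall_mul_mul_eq
  have hVact : ∀ᶠ u in 𝓝 (1 : G), ∀ m : M, u • m = m := eventually_forall_smul_eq
  obtain ⟨n, hn, hnV⟩ := exists_dvdSubgroup_subset he' (inter_mem hV hVact)
  set σ : G := e.symm (.ofAdd 1)
  have hN : n * Nat.card M ≠ 0 := mul_ne_zero hn Nat.card_pos.ne'
  have hK : dvdSubgroup e (n * Nat.card M) ≤ dvdSubgroup e n := dvdSubgroup_mono (dvd_mul_right _ _)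
  have hσn : σ ^ n ∈ dvdSubgroup e n := by rw [← zpow_natCast, zpow_mem_dvdSubgroup_iff hn]
  have hper : Function.Periodic (powCochain (fun q : G × G => f q.1 q.2) σ) (n * Nat.card M) :=
    powCochain_periodic (fun k => by
      simpa [pow_add] using hVf _ (hnV hσn).1 1 (mem_of_mem_nhds hV) (σ ^ k) σ)
      fun _ => card_nsmul_eq_zero'
  obtain ⟨g, hg, hfg⟩ := exists_continuous_coboundary_of_periodic hcoc _ (isOpen_dvdSubgroup he hN)
    (fun x y u hu v hv => hVf u (hnV (hK hu)).1 v (hnV (hK hv)).1 x y)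
    (fun u hu => (hnV (hK hu)).2) σ _ (exists_inv_pow_mul_mem_dvdSubgroup hN)
    (fun i => (zpow_mem_dvdSubgroup_iff hN i).mp) hper
  exact ⟨g, hg, fun x y => (hfg x y).symm⟩
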